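/- arXiv:2508.04376 — 5 statements merged into one kernel-verified Lean document; each statement's English description precedes it below -/
import Mathlib

section
/- Under the stated hypotheses, for every nonempty relatively open subset U of σ(S), the glocal spectral subspace 𝔛_S(Ū) is dense in X, where Ū denotes the closure of U. -/
/-!
Write `U = V ∩ σ(S)` with `V` open. If `w ∈ G` and `Φ w ∈ V`, then `Φ w` is an eigenvalue of `S`,
hence lies in `U`, and `z ↦ (Φ w - z)⁻¹ • f w` is an analytic solution of `(S - z) g z = f w` off
`Ū`; so `f w ∈ 𝔛_S(Ū)`. The set `W = G ∩ Φ⁻¹ V` is open, and nonempty because `V` meets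
`σ(S) ⊆ closure (Φ '' G)`. Composing `f` with the quotient map onto `X ⧸ closure (span (f '' W))`,
the identity theorem puts all of `f '' G` into that closed subspace, so density of
`span (f '' G)` gives density of `span (f '' W)`.
-/

/-- The glocal spectral subspace `𝔛_T(F)`: all `y` admitting an analytic solution
`g : ℂ ∖ F → X` of `(T - z) g z = y`. -/
def glocalSubspace {X : Type*} [NormedAddCommGroup X] [NormedSpace ℂ X]
    (T : X →L[ℂ] X) (F : Set ℂ) : Set X :=
  {y | ∃ g : ℂ → X, DifferentiableOn ℂ g Fᶜ ∧ ∀ z ∈ Fᶜ, T (g z) - z • g z = y}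

open Set Filter Topology

theorem ContinuousLinearMap.mem_spectrum_of_apply_eq_smul {R M : Type*} [CommRing R]
    [TopologicalSpace M] [AddCommGroup M] [Module R M] [IsTopologicalAddGroup M]
    [ContinuousConstSMul R M] {S : M →L[R] M} {c : R} {x : M} (hx : x ≠ 0)
    (h : S x = c • x) : c ∈ spectrum R S := by
  have hc : c ∈ spectrum R (S : Module.End R M) :=
    (Module.End.hasEigenvalue_of_hasEigenvector ⟨Module.End.mem_eigenspace_iff.2 h, hx⟩).mem_spectrum
  rw [spectrum.mem_iff] at hc ⊢
  exact fun hu => hc <| by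
    simpa [Algebra.algebraMap_eq_smul_one] using hu.map ContinuousLinearMap.toLinearMapRingHom

theorem DifferentiableOn.mem_of_eventually_mem {E : Type*} [NormedAddCommGroup E]
    [NormedSpace ℂ E] [CompleteSpace E] {f : ℂ → E} {U : Set ℂ} (hf : DifferentiableOn ℂ f U)
    (hUo : IsOpen U) (hU : IsPreconnected U) {M : Submodule ℂ E} (hM : IsClosed (M : Set E))
    {z₀ : ℂ} (hz₀ : z₀ ∈ U) (h : ∀ᶠ z in 𝓝 z₀, f z ∈ M) {z : ℂ} (hz : z ∈ U) : f z ∈ M := by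
  have := hM
  have hq : AnalyticOnNhd ℂ (M.mkQL ∘ f) U :=
    (M.mkQL.differentiable.comp_differentiableOn hf).analyticOnNhd hUo
  have h0 : M.mkQL ∘ f =ᶠ[𝓝 z₀] 0 := h.mono fun w hw => (Submodule.Quotient.mk_eq_zero M).2 hw
  exact (Submodule.Quotient.mk_eq_zero M).1
    (hq.eqOn_zero_of_preconnected_of_eventuallyEq_zero hU hz₀ h0 hz)

theorem dense_span_image_of_isOpen_subset {E : Type*} [NormedAddCommGroup E] [NormedSpace ℂ E]
    [CompleteSpace E] {f : ℂ → E} {G W : Set ℂ} (hf : DifferentiableOn ℂ f G) (hG : IsOpen G)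
    (hGconn : IsPreconnected G) (hdense : Dense (Submodule.span ℂ (f '' G) : Set E))
    (hW : IsOpen W) (hWG : W ⊆ G) (hWne : W.Nonempty) :
    Dense (Submodule.span ℂ (f '' W) : Set E) := by
  obtain ⟨z₀, hz₀⟩ := hWne
  set N := Submodule.span ℂ (f '' W)
  have hfN : ∀ z ∈ G, f z ∈ N.topologicalClosure :=
    fun z hz => hf.mem_of_eventually_mem hG hGconn N.isClosed_topologicalClosure (hWG hz₀)
      (eventually_of_mem (hW.mem_nhds hz₀) fun w hw =>
        N.le_topologicalClosure (Submodule.subset_span (mem_image_of_mem f hw))) hz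
  rw [Submodule.dense_iff_topologicalClosure_eq_top, eq_top_iff] at hdense ⊢
  exact hdense.trans <| Submodule.topologicalClosure_minimal _
    (Submodule.span_le.2 (image_subset_iff.2 hfN)) N.isClosed_topologicalClosure

def glocalSubmodule {X : Type*} [NormedAddCommGroup X] [NormedSpace ℂ X]
    (T : X →L[ℂ] X) (F : Set ℂ) : Submodule ℂ X where
  carrier := glocalSubspace T F
  zero_mem' := ⟨0, differentiableOn_const 0, by simp⟩
  add_mem' := by
    rintro a b ⟨g, hg, hga⟩ ⟨k, hk, hkb⟩
    refine ⟨g + k, hg.add hk, fun z hz => ?_⟩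
    rw [← hga z hz, ← hkb z hz, Pi.add_apply, map_add, smul_add]
    abel
  smul_mem' := by
    rintro c a ⟨g, hg, hga⟩
    refine ⟨c • g, hg.const_smul c, fun z hz => ?_⟩
    rw [← hga z hz, Pi.smul_apply, map_smul, smul_comm z c, smul_sub]

theorem mem_glocalSubspace_of_apply_eq_smul {X : Type*} [NormedAddCommGroup X]
    [NormedSpace ℂ X] {T : X →L[ℂ] X} {F : Set ℂ} {c : ℂ} {x : X} (hc : c ∈ F)
    (h : T x = c • x) : x ∈ glocalSubspace T F := by
  have hne : ∀ z ∈ Fᶜ, c - z ≠ 0 := fun z hz e => hz (sub_eq_zero.1 e ▸ hc)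
  refine ⟨fun z => (c - z)⁻¹ • x,
    (((differentiableOn_const c).sub differentiableOn_id).inv hne).smul_const x,
    fun z hz => ?_⟩
  rw [map_smul, h, smul_smul, smul_smul, ← sub_smul, mul_comm, ← mul_sub_right_distrib,
    mul_inv_cancel₀ (hne z hz), one_smul]

theorem stmt_3_general (X : Type*) [NormedAddCommGroup X] [NormedSpace ℂ X] [CompleteSpace X]
    (S : X →L[ℂ] X)
    (G : Set ℂ) (hG : IsOpen G) (hGconn : IsConnected G)
    (Φ : ℂ → ℂ) (hΦ : DifferentiableOn ℂ Φ G)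
    (f : ℂ → X) (hf : DifferentiableOn ℂ f G)
    (hfne : ∀ w ∈ G, f w ≠ 0) (heig : ∀ w ∈ G, S (f w) = Φ w • f w)
    (hdense : Dense (Submodule.span ℂ (f '' G) : Set X))
    (hspec : spectrum ℂ S ⊆ closure (Φ '' G))
    (U : Set ℂ) (hUne : U.Nonempty)
    (hUopen : ∃ V : Set ℂ, IsOpen V ∧ U = V ∩ spectrum ℂ S) :
    Dense (glocalSubspace S (closure U)) := by
  obtain ⟨V, hV, rfl⟩ := hUopen
  obtain ⟨μ, hμV, hμσ⟩ := hUne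
  set W := G ∩ Φ ⁻¹' V
  have hWopen : IsOpen W := hΦ.continuousOn.isOpen_inter_preimage hG hV
  have hWne : W.Nonempty := by
    obtain ⟨_, hzV, w, hw, rfl⟩ := mem_closure_iff.1 (hspec hμσ) V hV hμV
    exact ⟨w, hw, hzV⟩
  have hspan_le : Submodule.span ℂ (f '' W) ≤ glocalSubmodule S (closure (V ∩ spectrum ℂ S)) := by
    rw [Submodule.span_le]
    rintro _ ⟨w, ⟨hwG, hwV⟩, rfl⟩
    exact mem_glocalSubspace_of_apply_eq_smul
      (subset_closure ⟨hwV, S.mem_spectrum_of_apply_eq_smul (hfne w hwG) (heig w hwG)⟩)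
      (heig w hwG)
  exact (dense_span_image_of_isOpen_subset hf hG hGconn.isPreconnected hdense hWopen
    inter_subset_left hWne).mono hspan_le

/-- under the eigenvector-family hypotheses (dense span of the analytic
eigenvector family, spectrum contained in the closure of `Φ(G)`), for every nonempty
relatively open subset `U` of `σ(S)`, the glocal spectral subspace `𝔛_S(Ū)` is dense. -/
theorem stmt_3 (X : Type*) [NormedAddCommGroup X] [NormedSpace ℂ X] [CompleteSpace X]
    (S : X →L[ℂ] X)
    (G : Set ℂ) (hG : IsOpen G) (hGne : G.Nonempty) (hGconn : IsConnected G)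
    (Φ : ℂ → ℂ) (hΦ : DifferentiableOn ℂ Φ G) (hΦnc : ∃ a ∈ G, ∃ b ∈ G, Φ a ≠ Φ b)
    (f : ℂ → X) (hf : DifferentiableOn ℂ f G)
    (hfne : ∀ w ∈ G, f w ≠ 0) (heig : ∀ w ∈ G, S (f w) = Φ w • f w)
    (hdense : Dense (Submodule.span ℂ (f '' G) : Set X))
    (hspec : spectrum ℂ S ⊆ closure (Φ '' G))
    (U : Set ℂ) (hUne : U.Nonempty)
    (hUopen : ∃ V : Set ℂ, IsOpen V ∧ U = V ∩ spectrum ℂ S) :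
    Dense (glocalSubspace S (closure U)) :=
  stmt_3_general X S G hG hGconn Φ hΦ f hf hfne heig hdense hspec U hUne hUopen
end

section
/- Under the stated hypotheses, the adjoint S′ of S (acting on the continuous dual X′) has empty point spectrum: if φ ∈ X′ and μ ∈ ℂ satisfy S′φ = μ·φ, then φ = 0. -/
/-! `S′φ = μφ` and `S f(w) = Φ(w) f(w)` give `(Φ(w) - μ) φ(f(w)) = 0` on `G`. Since `Φ` is
nonconstant and continuous, `Φ ≠ μ` on a nonempty open subset of `G`, where the analytic function
`w ↦ φ(f(w))` therefore vanishes; by the identity theorem it vanishes on all of the connected set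
`G`, so `φ` kills the dense span of `f(G)` and is zero. -/

/-- The adjoint of `S` acting on the continuous dual: `(dualOp S φ) x = φ (S x)`. -/
noncomputable def dualOp {X : Type*} [NormedAddCommGroup X] [NormedSpace ℂ X]
    (S : X →L[ℂ] X) : (X →L[ℂ] ℂ) →L[ℂ] (X →L[ℂ] ℂ) :=
  (ContinuousLinearMap.compL ℂ X X ℂ).flip S

@[simp]
lemma dualOp_apply {X : Type*} [NormedAddCommGroup X] [NormedSpace ℂ X]
    (S : X →L[ℂ] X) (φ : X →L[ℂ] ℂ) (x : X) : dualOp S φ x = φ (S x) :=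
  rfl

lemma apply_eq_zero_of_dualOp_eq_smul_of_apply_eq_smul {X : Type*} [NormedAddCommGroup X]
    [NormedSpace ℂ X] {S : X →L[ℂ] X} {φ : X →L[ℂ] ℂ} {μ c : ℂ} {v : X}
    (hφ : dualOp S φ = μ • φ) (hv : S v = c • v) (hc : c ≠ μ) : φ v = 0 := by
  have hμ : φ (S v) = μ * φ v := by
    simpa using congrArg (fun ψ : X →L[ℂ] ℂ => ψ v) hφ
  have hc' : φ (S v) = c * φ v := by simp [hv]
  have : (c - μ) * φ v = 0 := by rw [sub_mul, ← hc', hμ, sub_self]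
  exact (mul_eq_zero.mp this).resolve_left (sub_ne_zero.mpr hc)

lemma DifferentiableOn.eqOn_zero_of_eq_zero_of_ne {E Y : Type*} [NormedAddCommGroup E]
    [NormedSpace ℂ E] [CompleteSpace E] [TopologicalSpace Y] [T1Space Y]
    {g : ℂ → E} {Φ : ℂ → Y} {G : Set ℂ} {μ : Y}
    (hg : DifferentiableOn ℂ g G) (hG : IsOpen G) (hGconn : IsPreconnected G)
    (hΦ : ContinuousOn Φ G) (hΦμ : ∃ w ∈ G, Φ w ≠ μ)
    (hvanish : ∀ w ∈ G, Φ w ≠ μ → g w = 0) : Set.EqOn g 0 G := by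
  obtain ⟨w₀, hw₀, hΦw₀⟩ := hΦμ
  have hopen : IsOpen (G ∩ Φ ⁻¹' {μ}ᶜ) := hΦ.isOpen_inter_preimage hG isOpen_compl_singleton
  have hev : g =ᶠ[nhds w₀] 0 := by
    filter_upwards [hopen.mem_nhds ⟨hw₀, hΦw₀⟩] with w hw
    exact hvanish w hw.1 hw.2
  exact (hg.analyticOnNhd hG).eqOn_zero_of_preconnected_of_eventuallyEq_zero hGconn hw₀ hev

theorem stmt_4_general (X : Type*) [NormedAddCommGroup X] [NormedSpace ℂ X]
    (S : X →L[ℂ] X)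
    (G : Set ℂ) (hG : IsOpen G) (hGconn : IsConnected G)
    (Φ : ℂ → ℂ) (hΦ : DifferentiableOn ℂ Φ G) (hΦnc : ∃ a ∈ G, ∃ b ∈ G, Φ a ≠ Φ b)
    (f : ℂ → X) (hf : DifferentiableOn ℂ f G)
    (heig : ∀ w ∈ G, S (f w) = Φ w • f w)
    (hdense : Dense (Submodule.span ℂ (f '' G) : Set X))
    (φ : X →L[ℂ] ℂ) (μ : ℂ) (hφ : dualOp S φ = μ • φ) :
    φ = 0 := by
  have hΦμ : ∃ w ∈ G, Φ w ≠ μ := by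
    obtain ⟨a, ha, b, hb, hab⟩ := hΦnc
    by_cases h : Φ a = μ
    · exact ⟨b, hb, fun hb' => hab (h.trans hb'.symm)⟩
    · exact ⟨a, ha, h⟩
  have hzero : Set.EqOn (fun w => φ (f w)) 0 G :=
    (φ.differentiable.comp_differentiableOn hf).eqOn_zero_of_eq_zero_of_ne hG
      hGconn.isPreconnected hΦ.continuousOn hΦμ
      fun w hw hne => apply_eq_zero_of_dualOp_eq_smul_of_apply_eq_smul hφ (heig w hw) hne
  refine ContinuousLinearMap.ext_on hdense ?_
  rintro _ ⟨w, hw, rfl⟩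
  exact hzero hw

/-- under the eigenvector-family hypotheses, the adjoint `S′` has
empty point spectrum. -/
theorem stmt_4 (X : Type*) [NormedAddCommGroup X] [NormedSpace ℂ X] [CompleteSpace X]
    (S : X →L[ℂ] X)
    (G : Set ℂ) (hG : IsOpen G) (hGne : G.Nonempty) (hGconn : IsConnected G)
    (Φ : ℂ → ℂ) (hΦ : DifferentiableOn ℂ Φ G) (hΦnc : ∃ a ∈ G, ∃ b ∈ G, Φ a ≠ Φ b)
    (f : ℂ → X) (hf : DifferentiableOn ℂ f G)
    (hfne : ∀ w ∈ G, f w ≠ 0) (heig : ∀ w ∈ G, S (f w) = Φ w • f w)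
    (hdense : Dense (Submodule.span ℂ (f '' G) : Set X))
    (hspec : spectrum ℂ S ⊆ closure (Φ '' G))
    (φ : X →L[ℂ] ℂ) (μ : ℂ) (hφ : dualOp S φ = μ • φ) :
    φ = 0 :=
  stmt_4_general X S G hG hGconn Φ hΦ hΦnc f hf heig hdense φ μ hφ
end

section
/- Under the stated hypotheses, for every closed set F ⊆ ℂ with F ⊊ σ(S), the local spectral subspace {φ ∈ X′ : σ_{S′}(φ) ⊆ F} of the adjoint S′ equals {0}. -/
/-- The local resolvent set `ρ_T(y)`: the union of all open `U ⊆ ℂ` admitting an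
analytic `g : U → X` with `(T - z) g z = y` on `U`. -/
def localResolvent {X : Type*} [NormedAddCommGroup X] [NormedSpace ℂ X]
    (T : X →L[ℂ] X) (y : X) : Set ℂ :=
  {z | ∃ U : Set ℂ, IsOpen U ∧ z ∈ U ∧
    ∃ g : ℂ → X, DifferentiableOn ℂ g U ∧ ∀ w ∈ U, T (g w) - w • g w = y}

/-- The local spectrum `σ_T(y) = ℂ ∖ ρ_T(y)`. -/
def localSpectrum {X : Type*} [NormedAddCommGroup X] [NormedSpace ℂ X]
    (T : X →L[ℂ] X) (y : X) : Set ℂ :=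
  (localResolvent T y)ᶜ

section LocalSpectrum

variable {X : Type*} [NormedAddCommGroup X] [NormedSpace ℂ X]

theorem localSpectrum_zero (T : X →L[ℂ] X) : localSpectrum T 0 = ∅ := by
  refine Set.eq_empty_of_forall_notMem fun z hz ↦ hz ?_
  refine ⟨Set.univ, isOpen_univ, Set.mem_univ z, fun _ ↦ 0, differentiableOn_const 0, ?_⟩
  intro w _
  rw [map_zero, smul_zero, sub_zero]

theorem apply_eq_zero_of_mem_localResolvent_dualOp {S : X →L[ℂ] X} {φ : X →L[ℂ] ℂ}
    {v : X} {μ : ℂ} (hv : S v = μ • v) (hμ : μ ∈ localResolvent (dualOp S) φ) :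
    φ v = 0 := by
  obtain ⟨U, -, hμU, g, -, hg⟩ := hμ
  have hpair : g μ (S v) - μ * g μ v = φ v := by
    simpa [dualOp] using congrArg (fun ψ : X →L[ℂ] ℂ ↦ ψ v) (hg μ hμU)
  rw [← hpair, hv, map_smul, smul_eq_mul, sub_self]

end LocalSpectrum

theorem stmt_5_general (X : Type*) [NormedAddCommGroup X] [NormedSpace ℂ X]
    (S : X →L[ℂ] X)
    (G : Set ℂ) (hG : IsOpen G) (hGconn : IsConnected G)
    (Φ : ℂ → ℂ) (hΦ : DifferentiableOn ℂ Φ G)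
    (f : ℂ → X) (hf : DifferentiableOn ℂ f G)
    (heig : ∀ w ∈ G, S (f w) = Φ w • f w)
    (hdense : Dense (Submodule.span ℂ (f '' G) : Set X))
    (hspec : spectrum ℂ S ⊆ closure (Φ '' G))
    (F : Set ℂ) (hF : IsClosed F) (hFsub : F ⊂ spectrum ℂ S) :
    {φ : X →L[ℂ] ℂ | localSpectrum (dualOp S) φ ⊆ F} = {0} := by
  ext φ
  refine ⟨fun hφ ↦ ?_, by rintro rfl; simp [localSpectrum_zero]⟩
  have hvanish : ∀ l ∈ G, Φ l ∉ F → φ (f l) = 0 := fun l hl hΦl ↦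
    apply_eq_zero_of_mem_localResolvent_dualOp (heig l hl)
      (by_contra fun h ↦ hΦl (hφ h))
  obtain ⟨l₀, hl₀G, hl₀F⟩ : ∃ l ∈ G, Φ l ∉ F := by
    have : ¬ closure (Φ '' G) ⊆ F := fun h ↦ hFsub.not_subset (hspec.trans h)
    simpa [hF.closure_subset_iff, Set.image_subset_iff, Set.subset_def] using this
  have hzero : Set.EqOn (fun l ↦ φ (f l)) 0 G := by
    refine ((φ.differentiable.comp_differentiableOn hf).analyticOnNhd hG
      |>.eqOn_zero_of_preconnected_of_eventuallyEq_zero hGconn.isPreconnected hl₀G ?_)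
    filter_upwards [(hΦ.continuousOn.isOpen_inter_preimage hG hF.isOpen_compl).mem_nhds
      ⟨hl₀G, hl₀F⟩] with l hl
    exact hvanish l hl.1 hl.2
  exact ContinuousLinearMap.ext_on hdense fun _ ⟨l, hl, hx⟩ ↦ hx ▸ hzero hl

/-- under the eigenvector-family hypotheses, for every closed
`F ⊊ σ(S)`, the local spectral subspace `{φ ∈ X′ : σ_{S′}(φ) ⊆ F}` is `{0}`. -/
theorem stmt_5 (X : Type*) [NormedAddCommGroup X] [NormedSpace ℂ X] [CompleteSpace X]
    (S : X →L[ℂ] X)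
    (G : Set ℂ) (hG : IsOpen G) (hGne : G.Nonempty) (hGconn : IsConnected G)
    (Φ : ℂ → ℂ) (hΦ : DifferentiableOn ℂ Φ G) (hΦnc : ∃ a ∈ G, ∃ b ∈ G, Φ a ≠ Φ b)
    (f : ℂ → X) (hf : DifferentiableOn ℂ f G)
    (hfne : ∀ w ∈ G, f w ≠ 0) (heig : ∀ w ∈ G, S (f w) = Φ w • f w)
    (hdense : Dense (Submodule.span ℂ (f '' G) : Set X))
    (hspec : spectrum ℂ S ⊆ closure (Φ '' G))
    (F : Set ℂ) (hF : IsClosed F) (hFsub : F ⊂ spectrum ℂ S) :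
    {φ : X →L[ℂ] ℂ | localSpectrum (dualOp S) φ ⊆ F} = {0} :=
  stmt_5_general X S G hG hGconn Φ hΦ f hf heig hdense hspec F hF hFsub
end

section
/- Under the stated hypotheses, the local spectrum of the adjoint S′ at every nonzero functional equals the spectrum of S: σ_{S′}(φ) = σ(S) for every φ ∈ X′ with φ ≠ 0. -/
/-!
The resolvent of `S′ = dualOp S` solves `(S′ - w) g(w) = φ` on the resolvent set of `S`,
so `σ_{S′}(φ) ⊆ σ(S)`. Conversely, if `g` solves `(S′ - w) g(w) = φ` near a point `z`, then
testing against the eigenvector `f λ` with `Φ λ` close to `z` gives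
`φ (f λ) = g(Φ λ) ((S - Φ λ) f λ) = 0`. When `z ∈ σ(S) ⊆ closure (Φ '' G)` such `λ` form a
nonempty open subset of `G`, so by the identity theorem `φ ∘ f` vanishes on all of `G`, and
density of the span of `f '' G` forces `φ = 0`.
-/

section LocalResolvent

variable {Y : Type*} [NormedAddCommGroup Y] [NormedSpace ℂ Y]

theorem resolventSet_subset_localResolvent [CompleteSpace Y] (T : Y →L[ℂ] Y) (y : Y) :
    resolventSet ℂ T ⊆ localResolvent T y := by
  intro z hz
  refine ⟨resolventSet ℂ T, spectrum.isOpen_resolventSet T, hz,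
    fun w => -resolvent T w y, fun w hw => ?_, fun w hw => ?_⟩
  · exact ((spectrum.hasDerivAt_resolvent_const_left hw).differentiableAt.clm_apply
      (differentiableAt_const y)).neg.differentiableWithinAt
  · have hinv : (algebraMap ℂ (Y →L[ℂ] Y) w - T) (resolvent T w y) = y := by
      rw [← mul_apply_eq_comp, resolvent, Ring.mul_inverse_cancel _ hw,
        one_apply_eq_self]
    simpa [Algebra.algebraMap_eq_smul_one, sub_eq_neg_add, add_comm] using hinv

end LocalResolvent

section DualOp

variable {X : Type*} [NormedAddCommGroup X] [NormedSpace ℂ X]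

@[simp]
theorem dualOp_apply_apply (S : X →L[ℂ] X) (ψ : X →L[ℂ] ℂ) (x : X) :
    dualOp S ψ x = ψ (S x) :=
  rfl

theorem dualOp_mul (A B : X →L[ℂ] X) : dualOp (A * B) = dualOp B * dualOp A :=
  rfl

theorem dualOp_one : dualOp (1 : X →L[ℂ] X) = 1 :=
  rfl

theorem IsUnit.dualOp {A : X →L[ℂ] X} (hA : IsUnit A) : IsUnit (dualOp A) := by
  obtain ⟨u, rfl⟩ := hA
  exact ⟨⟨_root_.dualOp ↑u, _root_.dualOp ↑u⁻¹, by rw [← dualOp_mul, u.inv_mul, dualOp_one],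
    by rw [← dualOp_mul, u.mul_inv, dualOp_one]⟩, rfl⟩

theorem resolventSet_subset_resolventSet_dualOp (S : X →L[ℂ] X) :
    resolventSet ℂ S ⊆ resolventSet ℂ (dualOp S) := by
  intro w hw
  rw [spectrum.mem_resolventSet_iff] at hw ⊢
  convert hw.dualOp using 1
  ext ψ x
  simp [Algebra.algebraMap_eq_smul_one]

theorem map_eigenvector_eq_zero_of_dualOp_sub_smul_eq {S : X →L[ℂ] X} {φ : X →L[ℂ] ℂ}
    {U : Set ℂ} {g : ℂ → X →L[ℂ] ℂ} (hg : ∀ w ∈ U, dualOp S (g w) - w • g w = φ)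
    {x : X} {μ : ℂ} (hx : S x = μ • x) (hμ : μ ∈ U) : φ x = 0 := by
  rw [← hg μ hμ]
  simp [hx]

end DualOp

theorem localResolvent_dualOp_subset_resolventSet {X : Type*} [NormedAddCommGroup X]
    [NormedSpace ℂ X] (S : X →L[ℂ] X) {G : Set ℂ} (hG : IsOpen G) (hGconn : IsConnected G)
    {Φ : ℂ → ℂ} (hΦ : DifferentiableOn ℂ Φ G) {f : ℂ → X} (hf : DifferentiableOn ℂ f G)
    (heig : ∀ w ∈ G, S (f w) = Φ w • f w) (hdense : Dense (Submodule.span ℂ (f '' G) : Set X))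
    (hspec : spectrum ℂ S ⊆ closure (Φ '' G)) {φ : X →L[ℂ] ℂ} (hφ : φ ≠ 0) :
    localResolvent (dualOp S) φ ⊆ resolventSet ℂ S := by
  rintro z ⟨U, hU, hzU, g, -, hg⟩
  by_contra hz
  obtain ⟨-, hμ₀U, μ₀, hμ₀G, rfl⟩ := mem_closure_iff.mp (hspec hz) U hU hzU
  have hV : IsOpen (G ∩ Φ ⁻¹' U) := hΦ.continuousOn.isOpen_inter_preimage hG hU
  have hvanish : (fun μ => φ (f μ)) =ᶠ[nhds μ₀] 0 :=
    Filter.eventually_of_mem (hV.mem_nhds ⟨hμ₀G, hμ₀U⟩) fun μ ⟨hμG, hμU⟩ =>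
      map_eigenvector_eq_zero_of_dualOp_sub_smul_eq hg (heig μ hμG) hμU
  have hanalytic : AnalyticOnNhd ℂ (fun μ => φ (f μ)) G :=
    (φ.differentiable.comp_differentiableOn hf).analyticOnNhd hG
  have hφf : Set.EqOn φ 0 (f '' G) := by
    rintro _ ⟨μ, hμG, rfl⟩
    exact hanalytic.eqOn_zero_of_preconnected_of_eventuallyEq_zero
      hGconn.isPreconnected hμ₀G hvanish hμG
  exact hφ (ContinuousLinearMap.ext_on hdense hφf)

theorem stmt_7_general (X : Type*) [NormedAddCommGroup X] [NormedSpace ℂ X] [CompleteSpace X]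
    (S : X →L[ℂ] X)
    (G : Set ℂ) (hG : IsOpen G) (hGconn : IsConnected G)
    (Φ : ℂ → ℂ) (hΦ : DifferentiableOn ℂ Φ G)
    (f : ℂ → X) (hf : DifferentiableOn ℂ f G)
    (heig : ∀ w ∈ G, S (f w) = Φ w • f w)
    (hdense : Dense (Submodule.span ℂ (f '' G) : Set X))
    (hspec : spectrum ℂ S ⊆ closure (Φ '' G))
    (φ : X →L[ℂ] ℂ) (hφ : φ ≠ 0) :
    localSpectrum (dualOp S) φ = spectrum ℂ S := by
  have hres : localResolvent (dualOp S) φ = resolventSet ℂ S :=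
    (localResolvent_dualOp_subset_resolventSet S hG hGconn hΦ hf heig hdense hspec hφ).antisymm
      ((resolventSet_subset_resolventSet_dualOp S).trans
        (resolventSet_subset_localResolvent (dualOp S) φ))
  rw [localSpectrum, hres, spectrum]

/-- under the eigenvector-family hypotheses, the local spectrum of the
adjoint `S′` at every nonzero functional equals the spectrum of `S`. -/
theorem stmt_7 (X : Type*) [NormedAddCommGroup X] [NormedSpace ℂ X] [CompleteSpace X]
    (S : X →L[ℂ] X)
    (G : Set ℂ) (hG : IsOpen G) (hGne : G.Nonempty) (hGconn : IsConnected G)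
    (Φ : ℂ → ℂ) (hΦ : DifferentiableOn ℂ Φ G) (hΦnc : ∃ a ∈ G, ∃ b ∈ G, Φ a ≠ Φ b)
    (f : ℂ → X) (hf : DifferentiableOn ℂ f G)
    (hfne : ∀ w ∈ G, f w ≠ 0) (heig : ∀ w ∈ G, S (f w) = Φ w • f w)
    (hdense : Dense (Submodule.span ℂ (f '' G) : Set X))
    (hspec : spectrum ℂ S ⊆ closure (Φ '' G))
    (φ : X →L[ℂ] ℂ) (hφ : φ ≠ 0) :
    localSpectrum (dualOp S) φ = spectrum ℂ S :=
  stmt_7_general X S G hG hGconn Φ hΦ f hf heig hdense hspec φ hφ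
end

section
/- Under the stated hypotheses, for every nonzero φ ∈ X′ the local spectral radius of the adjoint S′ at φ equals the spectral radius of S: limsup_{n→∞} ‖(S′)ⁿ φ‖^{1/n} = r(S), where r(S) = max{|z| : z ∈ σ(S)}. -/
/-!
Since `‖(S′)ⁿ φ‖ ≤ ‖φ‖ ‖Sⁿ‖`, Gelfand's formula bounds the local spectral radius of `S′` at `φ`
by `r(S)`. Conversely, if `S x = c x` and `φ x ≠ 0`, then `‖(S′)ⁿ φ‖ ‖x‖ ≥ |c|ⁿ |φ x|`, so `|c|`
is a lower bound. As the eigenvectors `f w` span a dense subspace and `φ ≠ 0`, the analytic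
function `φ ∘ f` does not vanish identically on the connected set `G`; by the identity theorem
its nonvanishing set is dense in `G`, so by continuity of `Φ` the eigenvalues `Φ w` with
`φ (f w) ≠ 0` are dense in `Φ(G)`, hence their closure contains `σ(S)`, where `r(S)` is attained.
-/

open Filter Topology Set

noncomputable def localSpectralRadius {E : Type*} [NormedAddCommGroup E] [NormedSpace ℂ E]
    (T : E →L[ℂ] E) (x : E) : ℝ :=
  limsup (fun n : ℕ => ‖(T ^ n) x‖ ^ (1 / (n : ℝ))) atTop

lemma tendsto_const_rpow_one_div_natCast {c : ℝ} (hc : 0 < c) :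
    Tendsto (fun n : ℕ => c ^ (1 / (n : ℝ))) atTop (𝓝 1) := by
  simpa [Function.comp_def] using (Real.continuousAt_const_rpow (b := 0) hc.ne').tendsto.comp
    tendsto_one_div_atTop_nhds_zero_nat

lemma Filter.Tendsto.const_mul_rpow_one_div_natCast {b : ℕ → ℝ} {c ρ : ℝ} (hc : 0 < c)
    (hb : ∀ n, 0 ≤ b n) (h : Tendsto (fun n : ℕ => b n ^ (1 / (n : ℝ))) atTop (𝓝 ρ)) :
    Tendsto (fun n : ℕ => (c * b n) ^ (1 / (n : ℝ))) atTop (𝓝 ρ) := by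
  simp_rw [Real.mul_rpow hc.le (hb _)]
  simpa using (tendsto_const_rpow_one_div_natCast hc).mul h

lemma tendsto_pow_rpow_one_div_natCast {x : ℝ} (hx : 0 ≤ x) :
    Tendsto (fun n : ℕ => (x ^ n) ^ (1 / (n : ℝ))) atTop (𝓝 x) :=
  tendsto_const_nhds.congr' <| (eventually_ne_atTop 0).mono fun n hn => by
    simp only [one_div, Real.pow_rpow_inv_natCast hx hn]

lemma spectralRadius_ne_top {A : Type*} [NormedRing A] [NormedAlgebra ℂ A] [CompleteSpace A]
    (a : A) : spectralRadius ℂ a ≠ ⊤ :=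
  ne_top_of_le_ne_top (by simpa using ENNReal.mul_ne_top ENNReal.coe_ne_top ENNReal.coe_ne_top)
    (spectrum.spectralRadius_le_pow_nnnorm_pow_one_div ℂ a 0)

lemma tendsto_norm_pow_rpow_one_div_spectralRadius {A : Type*} [NormedRing A]
    [NormedAlgebra ℂ A] [CompleteSpace A] (a : A) :
    Tendsto (fun n : ℕ => ‖a ^ n‖ ^ (1 / (n : ℝ))) atTop (𝓝 (spectralRadius ℂ a).toReal) := by
  refine ((ENNReal.tendsto_toReal (spectralRadius_ne_top a)).comp
    (spectrum.pow_norm_pow_one_div_tendsto_nhds_spectralRadius a)).congr fun n => ?_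
  exact ENNReal.toReal_ofReal (by positivity)

lemma sSup_norm_spectrum_eq_toReal_spectralRadius {A : Type*} [NormedRing A]
    [NormedAlgebra ℂ A] [CompleteSpace A] [Nontrivial A] (a : A) :
    sSup ((fun z : ℂ => ‖z‖) '' spectrum ℂ a) = (spectralRadius ℂ a).toReal := by
  obtain ⟨k, hk, hkρ⟩ := spectrum.exists_nnnorm_eq_spectralRadius a
  have hmax : IsGreatest ((fun z : ℂ => ‖z‖) '' spectrum ℂ a) ‖k‖ := by
    refine ⟨mem_image_of_mem _ hk, ?_⟩
    rintro _ ⟨z, hz, rfl⟩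
    have : (‖z‖₊ : ENNReal) ≤ ‖k‖₊ := hkρ ▸ le_iSup₂ (α := ENNReal) z hz
    exact_mod_cast this
  rw [hmax.csSup_eq, ← hkρ]
  rfl

lemma ContinuousLinearMap.pow_apply_of_apply_eq_smul {E : Type*} [NormedAddCommGroup E]
    [NormedSpace ℂ E] {T : E →L[ℂ] E} {c : ℂ} {x : E} (hx : T x = c • x) (n : ℕ) :
    (T ^ n) x = c ^ n • x := by
  induction n with
  | zero => simp
  | succ n ih => rw [pow_succ, mul_apply_eq_comp, hx, map_smul, ih, smul_smul, pow_succ']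

lemma AnalyticOnNhd.subset_closure_setOf_ne_zero {𝕜 E : Type*} [NontriviallyNormedField 𝕜]
    [NormedAddCommGroup E] [NormedSpace 𝕜 E] {g : 𝕜 → E} {U : Set 𝕜}
    (hg : AnalyticOnNhd 𝕜 g U) (hU : IsOpen U) (hUc : IsPreconnected U) (hg0 : ¬EqOn g 0 U) :
    U ⊆ closure {w ∈ U | g w ≠ 0} := by
  intro w₀ hw₀
  by_contra hcl
  rw [mem_closure_iff_frequently, not_frequently] at hcl
  refine hg0 (hg.eqOn_zero_of_preconnected_of_eventuallyEq_zero hUc hw₀ ?_)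
  filter_upwards [hcl, hU.mem_nhds hw₀] with w hw hwU
  simpa [hwU] using hw

lemma closure_image_subset_closure_image_of_subset_closure {α β : Type*} [TopologicalSpace α]
    [TopologicalSpace β] {f : α → β} {s t : Set α} (hf : ContinuousOn f s) (hts : t ⊆ s)
    (hst : s ⊆ closure t) : closure (f '' s) ⊆ closure (f '' t) :=
  closure_minimal (image_subset_iff.2 fun x hx => ((hf x hx).mono hts).mem_closure_image (hst hx))
    isClosed_closure

section DualOp

variable {X : Type*} [NormedAddCommGroup X] [NormedSpace ℂ X] (S : X →L[ℂ] X) (φ : X →L[ℂ] ℂ)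

lemma dualOp_pow_apply (n : ℕ) : (dualOp S ^ n) φ = φ.comp (S ^ n) := by
  induction n with
  | zero => rfl
  | succ n ih => rw [pow_succ' (dualOp S), mul_apply_eq_comp, ih, pow_succ S]; rfl

lemma norm_dualOp_pow_apply_le (n : ℕ) : ‖(dualOp S ^ n) φ‖ ≤ ‖φ‖ * ‖S ^ n‖ := by
  rw [dualOp_pow_apply]
  exact φ.opNorm_comp_le _

lemma norm_pow_mul_norm_apply_le_of_apply_eq_smul {x : X} {c : ℂ} (hx : S x = c • x) (n : ℕ) :
    ‖c‖ ^ n * ‖φ x‖ ≤ ‖(dualOp S ^ n) φ‖ * ‖x‖ :=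
  calc ‖c‖ ^ n * ‖φ x‖ = ‖((dualOp S ^ n) φ) x‖ := by
        rw [dualOp_pow_apply, ContinuousLinearMap.comp_apply,
          ContinuousLinearMap.pow_apply_of_apply_eq_smul hx, map_smul, norm_smul, norm_pow]
    _ ≤ ‖(dualOp S ^ n) φ‖ * ‖x‖ := ((dualOp S ^ n) φ).le_opNorm x

variable {φ}

lemma tendsto_norm_mul_norm_pow_rpow_one_div [CompleteSpace X] (hφ : φ ≠ 0) :
    Tendsto (fun n : ℕ => (‖φ‖ * ‖S ^ n‖) ^ (1 / (n : ℝ))) atTop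
      (𝓝 (spectralRadius ℂ S).toReal) :=
  (tendsto_norm_pow_rpow_one_div_spectralRadius S).const_mul_rpow_one_div_natCast
    (norm_pos_iff.2 hφ) fun _ => norm_nonneg _

lemma rpow_one_div_le_norm_mul_norm_pow (n : ℕ) :
    ‖(dualOp S ^ n) φ‖ ^ (1 / (n : ℝ)) ≤ (‖φ‖ * ‖S ^ n‖) ^ (1 / (n : ℝ)) :=
  Real.rpow_le_rpow (norm_nonneg _) (norm_dualOp_pow_apply_le S φ n) (by positivity)

lemma localSpectralRadius_dualOp_le [CompleteSpace X] (hφ : φ ≠ 0) :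
    localSpectralRadius (dualOp S) φ ≤ (spectralRadius ℂ S).toReal := by
  have h := tendsto_norm_mul_norm_pow_rpow_one_div S hφ
  rw [← h.limsup_eq]
  exact limsup_le_limsup (.of_forall (rpow_one_div_le_norm_mul_norm_pow S))
    (isCoboundedUnder_le_of_le atTop fun _ => by positivity) h.isBoundedUnder_le

lemma norm_le_localSpectralRadius_dualOp [CompleteSpace X] {x : X} {c : ℂ} (hx : S x = c • x)
    (hφx : φ x ≠ 0) :
    ‖c‖ ≤ localSpectralRadius (dualOp S) φ := by
  have hφ : φ ≠ 0 := fun h => hφx (by simp [h])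
  have hx0 : 0 < ‖x‖ := norm_pos_iff.2 fun h => hφx (by simp [h])
  have hlim : Tendsto (fun n : ℕ => (‖φ x‖ / ‖x‖ * ‖c‖ ^ n) ^ (1 / (n : ℝ))) atTop (𝓝 ‖c‖) :=
    (tendsto_pow_rpow_one_div_natCast (norm_nonneg c)).const_mul_rpow_one_div_natCast
      (div_pos (norm_pos_iff.2 hφx) hx0) fun _ => by positivity
  have hle : ∀ n : ℕ, (‖φ x‖ / ‖x‖ * ‖c‖ ^ n) ^ (1 / (n : ℝ)) ≤
      ‖(dualOp S ^ n) φ‖ ^ (1 / (n : ℝ)) := fun n => by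
    refine Real.rpow_le_rpow (by positivity) ?_ (by positivity)
    rw [div_mul_eq_mul_div, div_le_iff₀ hx0, mul_comm]
    exact norm_pow_mul_norm_apply_le_of_apply_eq_smul S φ hx n
  have hbdd := (tendsto_norm_mul_norm_pow_rpow_one_div S hφ).isBoundedUnder_le.mono_le
    (.of_forall (rpow_one_div_le_norm_mul_norm_pow S))
  rw [← hlim.limsup_eq]
  exact limsup_le_limsup (.of_forall hle) hlim.isCoboundedUnder_le hbdd

end DualOp

theorem stmt_8_general (X : Type*) [NormedAddCommGroup X] [NormedSpace ℂ X] [CompleteSpace X]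
    (S : X →L[ℂ] X)
    (G : Set ℂ) (hG : IsOpen G) (hGconn : IsConnected G)
    (Φ : ℂ → ℂ) (hΦ : DifferentiableOn ℂ Φ G)
    (f : ℂ → X) (hf : DifferentiableOn ℂ f G)
    (heig : ∀ w ∈ G, S (f w) = Φ w • f w)
    (hdense : Dense (Submodule.span ℂ (f '' G) : Set X))
    (hspec : spectrum ℂ S ⊆ closure (Φ '' G))
    (φ : X →L[ℂ] ℂ) (hφ : φ ≠ 0) :
    Filter.limsup (fun n : ℕ => ‖(dualOp S ^ n) φ‖ ^ (1 / (n : ℝ))) Filter.atTop =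
      sSup ((fun z : ℂ => ‖z‖) '' spectrum ℂ S) := by
  show localSpectralRadius (dualOp S) φ = _
  obtain ⟨x, hx⟩ : ∃ x, φ x ≠ 0 := by simpa [ContinuousLinearMap.ext_iff] using hφ
  have : Nontrivial X := ⟨x, 0, fun h => hx (by simp [h])⟩
  have hφf : ¬EqOn (fun w => φ (f w)) 0 G := fun h =>
    hφ (φ.ext_on hdense (by rintro _ ⟨w, hw, rfl⟩; exact h hw))
  have hG' : G ⊆ closure {w ∈ G | φ (f w) ≠ 0} :=
    ((φ.differentiable.comp_differentiableOn hf).analyticOnNhd hG).subset_closure_setOf_ne_zero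
      hG hGconn.isPreconnected hφf
  have hσ : spectrum ℂ S ⊆ closure (Φ '' {w ∈ G | φ (f w) ≠ 0}) :=
    hspec.trans (closure_image_subset_closure_image_of_subset_closure hΦ.continuousOn
      (sep_subset _ _) hG')
  have hball : Φ '' {w ∈ G | φ (f w) ≠ 0} ⊆
      Metric.closedBall 0 (localSpectralRadius (dualOp S) φ) := by
    rintro _ ⟨w, ⟨hw, hφw⟩, rfl⟩
    simpa using norm_le_localSpectralRadius_dualOp S (heig w hw) hφw
  obtain ⟨k, hk, hkρ⟩ := spectrum.exists_nnnorm_eq_spectralRadius S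
  rw [sSup_norm_spectrum_eq_toReal_spectralRadius]
  refine le_antisymm (localSpectralRadius_dualOp_le S hφ) ?_
  rw [← hkρ]
  simpa using closure_minimal hball Metric.isClosed_closedBall (hσ hk)

/-- under the eigenvector-family hypotheses, for every nonzero `φ ∈ X′`
the local spectral radius of `S′` at `φ`, i.e. `limsup_n ‖(S′)ⁿ φ‖^{1/n}`, equals the
spectral radius `r(S) = max {|z| : z ∈ σ(S)}`. -/
theorem stmt_8 (X : Type*) [NormedAddCommGroup X] [NormedSpace ℂ X] [CompleteSpace X]
    (S : X →L[ℂ] X)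
    (G : Set ℂ) (hG : IsOpen G) (hGne : G.Nonempty) (hGconn : IsConnected G)
    (Φ : ℂ → ℂ) (hΦ : DifferentiableOn ℂ Φ G) (hΦnc : ∃ a ∈ G, ∃ b ∈ G, Φ a ≠ Φ b)
    (f : ℂ → X) (hf : DifferentiableOn ℂ f G)
    (hfne : ∀ w ∈ G, f w ≠ 0) (heig : ∀ w ∈ G, S (f w) = Φ w • f w)
    (hdense : Dense (Submodule.span ℂ (f '' G) : Set X))
    (hspec : spectrum ℂ S ⊆ closure (Φ '' G))
    (φ : X →L[ℂ] ℂ) (hφ : φ ≠ 0) :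
    Filter.limsup (fun n : ℕ => ‖(dualOp S ^ n) φ‖ ^ (1 / (n : ℝ))) Filter.atTop =
      sSup ((fun z : ℂ => ‖z‖) '' spectrum ℂ S) :=
  stmt_8_general X S G hG hGconn Φ hΦ f hf heig hdense hspec φ hφ
end
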